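/- arXiv:math/0405189 — 5 statements merged into one kernel-verified Lean document; each statement's English description precedes it below -/
import Mathlib

section
/- For all ξ, η ∈ ℂ and r ∈ ℝ, the squared Euclidean distance from the origin to the point γ_{ξ,η}(r) equals ‖γ_{ξ,η}(0)‖² + r². Consequently, r = 0 gives the point on the line γ_{ξ,η} that lies closest to the origin, and this closest point is unique. -/
open Complex ComplexConjugate

/-- Inverse stereographic projection from the south pole:
`ν(ξ) = (2ξ/(1+|ξ|²), (1−|ξ|²)/(1+|ξ|²)) ∈ ℂ × ℝ`. -/
noncomputable def nu (ξ : ℂ) : ℂ × ℝ :=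
  ((2 * ξ) / (((1 + Complex.normSq ξ : ℝ) : ℂ)),
   (1 - Complex.normSq ξ) / (1 + Complex.normSq ξ))

/-- The parametrized line `γ_{ξ,η}(r) = (z(r), t(r)) ∈ ℂ × ℝ` with
`z(r) = (2(η − conj(η)ξ²) + 2ξ(1+|ξ|²)r)/(1+|ξ|²)²` and
`t(r) = (−2(η·conj(ξ) + conj(η)·ξ) + (1−|ξ|⁴)r)/(1+|ξ|²)²`. -/
noncomputable def gamma (ξ η : ℂ) (r : ℝ) : ℂ × ℝ :=
  ((2 * (η - conj η * ξ ^ 2) + 2 * ξ * ((1 + Complex.normSq ξ : ℝ) : ℂ) * (r : ℂ)) /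
      (((1 + Complex.normSq ξ : ℝ) : ℂ) ^ 2),
   (-2 * (η * conj ξ + conj η * ξ).re + (1 - Complex.normSq ξ ^ 2) * r) /
      (1 + Complex.normSq ξ) ^ 2)

/-!
The line is `γ_{ξ,η}(r) = γ_{ξ,η}(0) + r ν(ξ)`, where `ν(ξ)`, the inverse stereographic image
of `ξ`, is a unit vector and `γ_{ξ,η}(0)` is orthogonal to `ν(ξ)`. Pythagoras gives
`‖γ_{ξ,η}(r)‖² = ‖γ_{ξ,η}(0)‖² + r²`.
-/

def dot (p q : ℂ × ℝ) : ℝ := (p.1 * conj q.1).re + p.2 * q.2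

def sqNorm (p : ℂ × ℝ) : ℝ := normSq p.1 + p.2 ^ 2

lemma sqNorm_add_smul (p v : ℂ × ℝ) (r : ℝ) :
    sqNorm (p + r • v) = sqNorm p + 2 * r * dot p v + r ^ 2 * sqNorm v := by
  simp only [sqNorm, dot, Prod.fst_add, Prod.snd_add, Prod.smul_fst, Prod.smul_snd, normSq_add,
    real_smul, normSq_ofReal, map_mul, conj_ofReal, smul_eq_mul, mul_re, mul_im, ofReal_re,
    ofReal_im]
  ring

lemma sqNorm_nu (ξ : ℂ) : sqNorm (nu ξ) = 1 := by
  have hD : 0 < 1 + normSq ξ := by linarith [normSq_nonneg ξ]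
  simp only [sqNorm, nu, normSq_div, normSq_mul, normSq_ofReal, normSq_ofNat, div_pow]
  field_simp
  ring

lemma gamma_eq_add_smul_nu (ξ η : ℂ) (r : ℝ) : gamma ξ η r = gamma ξ η 0 + r • nu ξ := by
  have hD : (1 + normSq ξ : ℂ) ≠ 0 := by
    exact_mod_cast (by linarith [normSq_nonneg ξ] : 0 < 1 + normSq ξ).ne'
  ext
  · simp only [gamma, nu, Prod.fst_add, Prod.smul_fst, real_smul]
    push_cast
    field_simp
    ring
  · simp only [gamma, nu, Prod.snd_add, Prod.smul_snd, smul_eq_mul]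
    field_simp
    ring

lemma dot_gamma_zero_nu (ξ η : ℂ) : dot (gamma ξ η 0) (nu ξ) = 0 := by
  obtain ⟨a, b⟩ := ξ
  obtain ⟨c, d⟩ := η
  have hD : 0 < 1 + (a * a + b * b) := by nlinarith
  simp only [dot, gamma, nu, ofReal_zero, mul_zero, add_zero, zero_mul, div_re, div_im, mul_re,
    mul_im, add_re, sub_re, sub_im, conj_re, conj_im, ofReal_re, ofReal_im, normSq_apply, re_ofNat,
    im_ofNat, pow_two]
  field_simp
  ring

/-- The squared Euclidean distance from the origin to `γ_{ξ,η}(r)` equals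
`‖γ_{ξ,η}(0)‖² + r²`; consequently `r = 0` gives the unique point on the line
closest to the origin. -/
theorem gamma_sq_dist (ξ η : ℂ) :
    (∀ r : ℝ,
      Complex.normSq (gamma ξ η r).1 + (gamma ξ η r).2 ^ 2 =
        (Complex.normSq (gamma ξ η 0).1 + (gamma ξ η 0).2 ^ 2) + r ^ 2) ∧
    (∀ r : ℝ,
      Complex.normSq (gamma ξ η 0).1 + (gamma ξ η 0).2 ^ 2 ≤
        Complex.normSq (gamma ξ η r).1 + (gamma ξ η r).2 ^ 2) ∧
    (∀ r : ℝ,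
      Complex.normSq (gamma ξ η r).1 + (gamma ξ η r).2 ^ 2 =
        Complex.normSq (gamma ξ η 0).1 + (gamma ξ η 0).2 ^ 2 → r = 0) := by
  have key (r : ℝ) : sqNorm (gamma ξ η r) = sqNorm (gamma ξ η 0) + r ^ 2 := by
    rw [gamma_eq_add_smul_nu, sqNorm_add_smul, dot_gamma_zero_nu, sqNorm_nu]
    ring
  unfold sqNorm at key
  refine ⟨key, fun r => ?_, fun r h => ?_⟩
  · linarith [key r, sq_nonneg r]
  · rw [key] at h
    exact pow_eq_zero_iff two_ne_zero |>.mp (by linarith)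
end

section
/- Let (z₀, t₀) ∈ ℂ × ℝ and ξ ∈ ℂ. If η ∈ ℂ and r ∈ ℝ satisfy γ_{ξ,η}(r) = (z₀, t₀), then necessarily η = (1/2)(z₀ − 2t₀ξ − conj(z₀)ξ²) and r = (conj(ξ)z₀ + ξ·conj(z₀) + (1−|ξ|²)t₀)/(1+|ξ|²). In particular, for each fixed ξ ∈ ℂ the map (η, r) ↦ γ_{ξ,η}(r) is a bijection from ℂ × ℝ onto ℂ × ℝ. -/
open Complex ComplexConjugate

lemma re_selfconj (a b : ℂ) :
    (((a * conj b + conj a * b).re : ℝ) : ℂ) = a * conj b + conj a * b := by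
  have h : a * conj b + conj a * b = ((2 * (a * conj b).re : ℝ) : ℂ) := by
    rw [← Complex.add_conj, map_mul, Complex.conj_conj]
  rw [h, Complex.ofReal_re]

lemma gamma_key (ξ z₀ : ℂ) (t₀ : ℝ) (η : ℂ) (r : ℝ) (h : gamma ξ η r = (z₀, t₀)) :
    η = (1 / 2) * (z₀ - 2 * (t₀ : ℂ) * ξ - conj z₀ * ξ ^ 2) ∧
    r = ((conj ξ * z₀ + ξ * conj z₀).re + (1 - Complex.normSq ξ) * t₀) /
        (1 + Complex.normSq ξ) := by
  have hq : (0:ℝ) ≤ Complex.normSq ξ := Complex.normSq_nonneg ξ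
  have hs : (1 + Complex.normSq ξ) ≠ 0 := by positivity
  have hsC : ((1 + Complex.normSq ξ : ℝ) : ℂ) ≠ 0 := by exact_mod_cast hs
  have hS : (1 + ξ * conj ξ : ℂ) ≠ 0 := by
    rw [Complex.mul_conj]; exact_mod_cast hsC
  have h1 := congrArg Prod.fst h
  have h2 := congrArg Prod.snd h
  simp only [gamma] at h1 h2
  rw [div_eq_iff (pow_ne_zero 2 hsC)] at h1
  rw [div_eq_iff (pow_ne_zero 2 hs)] at h2
  have h2c := congrArg (Complex.ofReal) h2
  push_cast at h2c
  rw [re_selfconj] at h2c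
  have h1c := congrArg conj h1
  simp only [map_add, map_sub, map_mul, map_pow, map_ofNat, Complex.conj_conj,
    Complex.conj_ofReal] at h1c
  push_cast at h1 h1c
  simp only [← Complex.mul_conj] at h1 h1c h2c
  constructor
  · have key : (2 * (1 + ξ * conj ξ) ^ 2) * η =
        (2 * (1 + ξ * conj ξ) ^ 2) *
          ((1 / 2) * (z₀ - 2 * (t₀ : ℂ) * ξ - conj z₀ * ξ ^ 2)) := by
      linear_combination h1 - ξ ^ 2 * h1c - 2 * ξ * h2c
    exact mul_left_cancel₀ (mul_ne_zero two_ne_zero (pow_ne_zero 2 hS)) key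
  · rw [eq_div_iff hs, ← Complex.ofReal_inj]
    push_cast
    have hre2 : (((conj ξ * z₀ + ξ * conj z₀).re : ℝ) : ℂ) = conj ξ * z₀ + ξ * conj z₀ := by
      have := re_selfconj (conj ξ) (conj z₀); simpa using this
    rw [hre2]
    simp only [← Complex.mul_conj]
    have key : ((1 + ξ * conj ξ) ^ 2) * ((r : ℂ) * (1 + ξ * conj ξ)) =
        ((1 + ξ * conj ξ) ^ 2) *
          (conj ξ * z₀ + ξ * conj z₀ + (1 - ξ * conj ξ) * (t₀ : ℂ)) := by
      linear_combination conj ξ * h1 + ξ * h1c + (1 - ξ * conj ξ) * h2c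
    exact mul_left_cancel₀ (pow_ne_zero 2 hS) key

/-- If `γ_{ξ,η}(r) = (z₀, t₀)` then necessarily `η = (1/2)(z₀ − 2t₀ξ − conj(z₀)ξ²)`
and `r = (conj(ξ)z₀ + ξ·conj(z₀) + (1−|ξ|²)t₀)/(1+|ξ|²)`; in particular, for each
fixed `ξ` the map `(η, r) ↦ γ_{ξ,η}(r)` is a bijection of `ℂ × ℝ` onto `ℂ × ℝ`. -/
theorem gamma_inverse_unique (ξ : ℂ) :
    (∀ (z₀ : ℂ) (t₀ : ℝ) (η : ℂ) (r : ℝ), gamma ξ η r = (z₀, t₀) →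
      η = (1 / 2) * (z₀ - 2 * (t₀ : ℂ) * ξ - conj z₀ * ξ ^ 2) ∧
      r = ((conj ξ * z₀ + ξ * conj z₀).re + (1 - Complex.normSq ξ) * t₀) /
          (1 + Complex.normSq ξ)) ∧
    Function.Bijective (fun p : ℂ × ℝ => gamma ξ p.1 p.2) := by
  have hq : (0:ℝ) ≤ Complex.normSq ξ := Complex.normSq_nonneg ξ
  have hs : (1 + Complex.normSq ξ) ≠ 0 := by positivity
  have hsC : ((1 + Complex.normSq ξ : ℝ) : ℂ) ≠ 0 := by exact_mod_cast hs
  have hS : (1 + ξ * conj ξ : ℂ) ≠ 0 := by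
    rw [Complex.mul_conj]; exact_mod_cast hsC
  refine ⟨fun z₀ t₀ η r h => gamma_key ξ z₀ t₀ η r h, ?_, ?_⟩
  · intro p p' hpp'
    have A := gamma_key ξ (gamma ξ p'.1 p'.2).1 (gamma ξ p'.1 p'.2).2 p.1 p.2
      (by simpa using hpp')
    have B := gamma_key ξ (gamma ξ p'.1 p'.2).1 (gamma ξ p'.1 p'.2).2 p'.1 p'.2 rfl
    exact Prod.ext (A.1.trans B.1.symm) (A.2.trans B.2.symm)
  · rintro ⟨z₀, t₀⟩
    refine ⟨((1 / 2) * (z₀ - 2 * (t₀ : ℂ) * ξ - conj z₀ * ξ ^ 2),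
      ((conj ξ * z₀ + ξ * conj z₀).re + (1 - Complex.normSq ξ) * t₀) /
          (1 + Complex.normSq ξ)), ?_⟩
    have hre2 : (((conj ξ * z₀ + ξ * conj z₀).re : ℝ) : ℂ) = conj ξ * z₀ + ξ * conj z₀ := by
      have := re_selfconj (conj ξ) (conj z₀); simpa using this
    simp only [gamma, Prod.mk.injEq]
    constructor
    · rw [div_eq_iff (pow_ne_zero 2 hsC)]
      push_cast
      simp only [map_mul, map_sub, map_add, map_pow, map_div₀, map_one, map_ofNat,
        Complex.conj_conj, Complex.conj_ofReal]
      rw [hre2]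
      simp only [← Complex.mul_conj]
      field_simp
      ring
    · rw [div_eq_iff (pow_ne_zero 2 hs), ← Complex.ofReal_inj]
      push_cast
      rw [re_selfconj]
      simp only [map_mul, map_sub, map_add, map_pow, map_div₀, map_one, map_ofNat,
        Complex.conj_conj, Complex.conj_ofReal]
      rw [hre2]
      simp only [← Complex.mul_conj]
      field_simp
      ring
end

section
/- Let a₁, a₂, a₃ > 0 and ξ ∈ ℂ. Set D(ξ) = a₁(ξ+conj(ξ))² − a₂(ξ−conj(ξ))² + a₃(1−|ξ|²)². Then D(ξ) > 0, and with η = [a₁(ξ+conj(ξ))(1−ξ²) + a₂(ξ−conj(ξ))(1+ξ²) − 2a₃ξ(1−|ξ|²)] / (2√(D(ξ))) and r = √(D(ξ))/(1+|ξ|²), the point (z,t) = γ_{ξ,η}(r) satisfies x₁²/a₁ + x₂²/a₂ + x₃²/a₃ = 1 where z = x₁ + ix₂ and t = x₃; i.e. the point lies on the ellipsoid with semi-axes √a₁, √a₂, √a₃. -/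
open Complex ComplexConjugate

/-- The radicand of the ellipsoid parametrization, as a complex number:
`a₁(ξ+conj ξ)² − a₂(ξ−conj ξ)² + a₃(1−|ξ|²)²` (it is in fact real). -/
noncomputable def Dc (a₁ a₂ a₃ : ℝ) (ξ : ℂ) : ℂ :=
  (a₁ : ℂ) * (ξ + conj ξ) ^ 2 - (a₂ : ℂ) * (ξ - conj ξ) ^ 2 +
    (a₃ : ℂ) * (((1 - Complex.normSq ξ : ℝ) : ℂ)) ^ 2

/-! With `s = √D`, the chosen point is `γ_{ξ,η}(r) = (2a₁ Re ξ, 2a₂ Im ξ, a₃(1 − |ξ|²)) / s`. Writing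
`u = (2 Re ξ, 2 Im ξ, 1 − |ξ|²) = (1 + |ξ|²) ν(ξ)` and `A = diag(a₁, a₂, a₃)`, this is `A u / √(uᵀ A u)`,
the point of the ellipsoid with outward normal `ν(ξ)`, and `D = uᵀ A u`. It lies on the ellipsoid
because `(A u)ᵀ A⁻¹ (A u) = uᵀ A u`, and `D > 0` because `|u| = 1 + |ξ|² > 0`. Identifying the point
amounts to two polynomial identities in `ξ` and `conj ξ`, once `|ξ|²` is written as `ξ * conj ξ`. -/

theorem weighted_sum_sq_pos {a₁ a₂ a₃ u₁ u₂ u₃ : ℝ} (ha₁ : 0 < a₁) (ha₂ : 0 < a₂) (ha₃ : 0 < a₃)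
    (hu : 0 < u₁ ^ 2 + u₂ ^ 2 + u₃ ^ 2) : 0 < a₁ * u₁ ^ 2 + a₂ * u₂ ^ 2 + a₃ * u₃ ^ 2 := by
  have h₁ := min_le_left a₁ (min a₂ a₃)
  have h₂ := (min_le_right a₁ (min a₂ a₃)).trans (min_le_left a₂ a₃)
  have h₃ := (min_le_right a₁ (min a₂ a₃)).trans (min_le_right a₂ a₃)
  calc 0 < min a₁ (min a₂ a₃) * (u₁ ^ 2 + u₂ ^ 2 + u₃ ^ 2) :=
        mul_pos (lt_min ha₁ (lt_min ha₂ ha₃)) hu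
    _ ≤ a₁ * u₁ ^ 2 + a₂ * u₂ ^ 2 + a₃ * u₃ ^ 2 := by
      nlinarith [sq_nonneg u₁, sq_nonneg u₂, sq_nonneg u₃]

theorem mul_div_sq_div_sum_eq_one {a₁ a₂ a₃ u₁ u₂ u₃ s : ℝ}
    (ha₁ : a₁ ≠ 0) (ha₂ : a₂ ≠ 0) (ha₃ : a₃ ≠ 0) (hs0 : s ≠ 0)
    (hs : s ^ 2 = a₁ * u₁ ^ 2 + a₂ * u₂ ^ 2 + a₃ * u₃ ^ 2) :
    (a₁ * u₁ / s) ^ 2 / a₁ + (a₂ * u₂ / s) ^ 2 / a₂ + (a₃ * u₃ / s) ^ 2 / a₃ = 1 := by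
  have h {a u : ℝ} (ha : a ≠ 0) : (a * u / s) ^ 2 / a = a * u ^ 2 / s ^ 2 := by
    field_simp [ha]
  rw [h ha₁, h ha₂, h ha₃, ← add_div, ← add_div, ← hs, div_self (pow_ne_zero 2 hs0)]

theorem two_re_sq_add_two_im_sq_add_one_sub_normSq_sq (ξ : ℂ) :
    (2 * ξ.re) ^ 2 + (2 * ξ.im) ^ 2 + (1 - normSq ξ) ^ 2 = (1 + normSq ξ) ^ 2 := by
  rw [normSq_apply]
  ring

theorem Dc_eq_ofReal (a₁ a₂ a₃ : ℝ) (ξ : ℂ) :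
    Dc a₁ a₂ a₃ ξ =
      ((a₁ * (2 * ξ.re) ^ 2 + a₂ * (2 * ξ.im) ^ 2 + a₃ * (1 - normSq ξ) ^ 2 : ℝ) : ℂ) := by
  rw [Dc, add_conj, sub_conj]
  push_cast
  linear_combination (-4 * a₂ * ξ.im ^ 2 : ℂ) * I_sq

theorem Dc_re (a₁ a₂ a₃ : ℝ) (ξ : ℂ) :
    (Dc a₁ a₂ a₃ ξ).re = a₁ * (2 * ξ.re) ^ 2 + a₂ * (2 * ξ.im) ^ 2 + a₃ * (1 - normSq ξ) ^ 2 := by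
  rw [Dc_eq_ofReal, ofReal_re]

theorem Dc_re_pos {a₁ a₂ a₃ : ℝ} (ha₁ : 0 < a₁) (ha₂ : 0 < a₂) (ha₃ : 0 < a₃) (ξ : ℂ) :
    0 < (Dc a₁ a₂ a₃ ξ).re := by
  rw [Dc_re]
  refine weighted_sum_sq_pos ha₁ ha₂ ha₃ ?_
  rw [two_re_sq_add_two_im_sq_add_one_sub_normSq_sq]
  have := normSq_nonneg ξ
  positivity

theorem ofReal_gamma_snd (ξ η : ℂ) (r : ℝ) :
    ((gamma ξ η r).2 : ℂ) =
      (-2 * (η * conj ξ + conj η * ξ) + (1 - normSq ξ ^ 2) * r) / (1 + normSq ξ) ^ 2 := by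
  rw [gamma, show conj η * ξ = conj (η * conj ξ) by simp, add_conj, ofReal_re]
  push_cast
  ring

def etaNumerator (a₁ a₂ a₃ : ℝ) (ξ : ℂ) : ℂ :=
  (a₁ : ℂ) * (ξ + conj ξ) * (1 - ξ ^ 2) + (a₂ : ℂ) * (ξ - conj ξ) * (1 + ξ ^ 2) -
    2 * (a₃ : ℂ) * ξ * (((1 - Complex.normSq ξ : ℝ) : ℂ))

theorem gamma_etaNumerator (a₁ a₂ a₃ : ℝ) (ξ : ℂ) {s : ℝ} (hs0 : s ≠ 0)
    (hs : (s : ℂ) ^ 2 = Dc a₁ a₂ a₃ ξ) :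
    gamma ξ (etaNumerator a₁ a₂ a₃ ξ / (2 * s)) (s / (1 + normSq ξ)) =
      ((a₁ * (ξ + conj ξ) + a₂ * (ξ - conj ξ)) / s, a₃ * (1 - normSq ξ) / s) := by
  have hc : ((1 + normSq ξ : ℝ) : ℂ) ≠ 0 := by
    exact_mod_cast (add_pos_of_pos_of_nonneg one_pos (normSq_nonneg ξ)).ne'
  have hsC : (s : ℂ) ≠ 0 := ofReal_ne_zero.mpr hs0
  rw [Dc] at hs
  refine Prod.ext ?_ (ofReal_injective ?_)
  on_goal 2 => rw [ofReal_gamma_snd]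
  all_goals
    simp only [gamma, etaNumerator, map_div₀, map_mul, map_sub, map_add, conj_ofReal, conj_conj,
      map_pow, map_one, map_ofNat]
    push_cast at hc hs ⊢
    rw [← mul_conj] at hc hs ⊢
    field_simp
  · linear_combination 2 * ξ * hs
  · linear_combination (1 - ξ ^ 2 * conj ξ ^ 2) * hs

/-- The ellipsoid parametrization: with
`η = [a₁(ξ+conj ξ)(1−ξ²) + a₂(ξ−conj ξ)(1+ξ²) − 2a₃ξ(1−|ξ|²)]/(2√D)` and
`r = √D/(1+|ξ|²)`, the radicand `D` is positive and the point `γ_{ξ,η}(r)` lies on the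
ellipsoid `x₁²/a₁ + x₂²/a₂ + x₃²/a₃ = 1`. -/
theorem ellipsoid_parametrization (a₁ a₂ a₃ : ℝ)
    (ha₁ : 0 < a₁) (ha₂ : 0 < a₂) (ha₃ : 0 < a₃) (ξ : ℂ) (η : ℂ) (r : ℝ)
    (hη : η = ((a₁ : ℂ) * (ξ + conj ξ) * (1 - ξ ^ 2) +
        (a₂ : ℂ) * (ξ - conj ξ) * (1 + ξ ^ 2) -
        2 * (a₃ : ℂ) * ξ * (((1 - Complex.normSq ξ : ℝ) : ℂ))) /
        (2 * ((Real.sqrt (Dc a₁ a₂ a₃ ξ).re : ℝ) : ℂ)))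
    (hr : r = Real.sqrt (Dc a₁ a₂ a₃ ξ).re / (1 + Complex.normSq ξ)) :
    0 < (Dc a₁ a₂ a₃ ξ).re ∧
    (gamma ξ η r).1.re ^ 2 / a₁ + (gamma ξ η r).1.im ^ 2 / a₂ +
      (gamma ξ η r).2 ^ 2 / a₃ = 1 := by
  have hD := Dc_re_pos ha₁ ha₂ ha₃ ξ
  refine ⟨hD, ?_⟩
  set s := Real.sqrt (Dc a₁ a₂ a₃ ξ).re
  have hs0 : s ≠ 0 := (Real.sqrt_pos.mpr hD).ne'
  have hs : s ^ 2 = (Dc a₁ a₂ a₃ ξ).re := Real.sq_sqrt hD.le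
  have hsC : (s : ℂ) ^ 2 = Dc a₁ a₂ a₃ ξ := by
    rw [Dc_eq_ofReal a₁ a₂ a₃ ξ, ← Dc_re, ← hs, ofReal_pow]
  obtain rfl : η = etaNumerator a₁ a₂ a₃ ξ / (2 * s) := hη
  rw [hr, gamma_etaNumerator a₁ a₂ a₃ ξ hs0 hsC, add_conj, sub_conj]
  simp only [div_ofReal_re, div_ofReal_im, add_re, add_im, mul_re, mul_im, ofReal_re,
    ofReal_im, I_re, I_im]
  rw [Dc_re] at hs
  convert mul_div_sq_div_sum_eq_one ha₁.ne' ha₂.ne' ha₃.ne' hs0 hs using 3 <;>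
    ring
end

section
/- Let a > b > 0, let ε = ±1, and let ξ ∈ ℂ with ξ ≠ 0. Set η = ε·(a/2)·(ξ/|ξ|)·(1−|ξ|²) and r = b + ε·2a|ξ|/(1+|ξ|²). Then the point (z,t) = γ_{ξ,η}(r), with z = x₁ + ix₂ and t = x₃, satisfies (√(x₁²+x₂²) − a)² + x₃² = b²; i.e. it lies on the rotationally symmetric torus with central radius a and tube radius b. (Here √(ξ/conj(ξ)) = ξ/|ξ| for ξ ≠ 0.) -/
open Complex ComplexConjugate

/-! When `η` is a real multiple of `ξ`, the point `γ_{ξ,η}(r)` is a real multiple of `ξ` together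
with a height. For the torus data it is `(ε a ξ/|ξ|, 0) + b ν(ξ)`: since `ν(ξ)` is a unit vector
in the plane spanned by `ξ` and the vertical axis, this is a point of the meridian circle of
radius `b` about the point `ε a ξ/|ξ|` of the core circle. -/

theorem gamma_mul_ofReal (ξ : ℂ) (q r : ℝ) :
    gamma ξ (ξ * q) r =
      (ξ * (((2 * q * (1 - normSq ξ) + 2 * (1 + normSq ξ) * r) / (1 + normSq ξ) ^ 2 : ℝ) : ℂ),
        (-4 * q * normSq ξ + (1 - normSq ξ ^ 2) * r) / (1 + normSq ξ) ^ 2) := by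
  have hconj : conj ξ * ξ = (normSq ξ : ℂ) := by rw [mul_comm, mul_conj]
  simp only [gamma, Prod.mk.injEq, map_mul, conj_ofReal]
  constructor
  · push_cast
    rw [← mul_div_assoc]
    congr 1
    linear_combination (-2 * q * ξ) * hconj
  · rw [show ξ * q * conj ξ + conj ξ * q * ξ = ((2 * q * normSq ξ : ℝ) : ℂ) by
      push_cast; linear_combination (2 * (q : ℂ)) * hconj, ofReal_re]
    ring

theorem abs_add_mul_sub_sq_add_sq {a b c d ε : ℝ} (hε : ε = 1 ∨ ε = -1) (hba : |b| ≤ a)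
    (hcd : c ^ 2 + d ^ 2 = 1) :
    (|ε * a + b * c| - a) ^ 2 + (b * d) ^ 2 = b ^ 2 := by
  have hc : |c| ≤ 1 := (sq_le_one_iff_abs_le_one c).mp (by nlinarith)
  have hbc : |b * c| ≤ a := by
    rw [abs_mul]; nlinarith [abs_nonneg b, abs_nonneg c]
  rcases hε with rfl | rfl
  · rw [abs_of_nonneg (by linarith [neg_abs_le (b * c)])]
    linear_combination b ^ 2 * hcd
  · rw [abs_of_nonpos (by linarith [le_abs_self (b * c)])]
    linear_combination b ^ 2 * hcd

/-- The torus parametrization: for `a > b > 0`, `ε = ±1`, `ξ ≠ 0`, with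
`η = ε·(a/2)·(ξ/|ξ|)·(1−|ξ|²)` and `r = b + ε·2a|ξ|/(1+|ξ|²)`, the point
`(z,t) = γ_{ξ,η}(r)` lies on the rotationally symmetric torus
`(√(x₁²+x₂²) − a)² + x₃² = b²`. -/
theorem torus_parametrization (a b : ℝ) (hab : b < a) (hb : 0 < b)
    (ε : ℝ) (hε : ε = 1 ∨ ε = -1) (ξ : ℂ) (hξ : ξ ≠ 0) (η : ℂ) (r : ℝ)
    (hη : η = (ε : ℂ) * ((a : ℂ) / 2) * (ξ / ((‖ξ‖ : ℝ) : ℂ)) *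
        (((1 - Complex.normSq ξ : ℝ) : ℂ)))
    (hr : r = b + ε * (2 * a * ‖ξ‖) / (1 + Complex.normSq ξ)) :
    (Real.sqrt ((gamma ξ η r).1.re ^ 2 + (gamma ξ η r).1.im ^ 2) - a) ^ 2 +
      (gamma ξ η r).2 ^ 2 = b ^ 2 := by
  have hs : 0 < ‖ξ‖ := norm_pos_iff.mpr hξ
  have hN : normSq ξ = ‖ξ‖ ^ 2 := (Complex.sq_norm ξ).symm
  have hη' : η = ξ * ((ε * a * (1 - ‖ξ‖ ^ 2) / (2 * ‖ξ‖) : ℝ) : ℂ) := by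
    rw [hη, hN]; push_cast; field_simp
  have hba : |b| ≤ a := abs_le.mpr ⟨by linarith, by linarith⟩
  have hcirc : (2 * ‖ξ‖ / (1 + ‖ξ‖ ^ 2)) ^ 2 + ((1 - ‖ξ‖ ^ 2) / (1 + ‖ξ‖ ^ 2)) ^ 2 = 1 := by
    field_simp; ring
  rw [hη', gamma_mul_ofReal, ← norm_eq_sqrt_sq_add_sq]
  convert abs_add_mul_sub_sq_add_sq hε hba hcirc using 4
  · rw [← sq_eq_sq₀ (norm_nonneg _) (abs_nonneg _), sq_abs, norm_mul, mul_pow, norm_real,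
      Real.norm_eq_abs, sq_abs, hr, hN]
    field_simp
    ring
  · rw [hr, hN]
    field_simp
    ring
end

section
/- Let a > b > 0, ε = ±1, and ξ ∈ ℂ with ξ ≠ 0. With η = ε·(a/2)·(ξ/|ξ|)·(1−|ξ|²), r = b + ε·2a|ξ|/(1+|ξ|²), and (z,t) = γ_{ξ,η}(r), write z = x₁ + ix₂, t = x₃ and ρ = √(x₁²+x₂²). Then ρ > 0 and the direction of the line satisfies ν(ξ) = ( (z/ρ)·(ρ − a)/b , x₃/b ); i.e. ν(ξ) is the unit normal to the torus (√(x₁²+x₂²) − a)² + x₃² = b² at the point (z,t), so the line γ_{ξ,η} is normal to the torus there. -/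
/-!
Write `u = ε ξ/|ξ|`, a point of the unit circle. The data `η, r` are chosen so that
`γ_{ξ,η}(r) = (a u, 0) + b ν(ξ)`: the point of the core circle of the torus, moved by `b` along
`ν(ξ)`. Moreover `ν(ξ) = (σ u, τ)` with `σ = 2ε|ξ|/(1+|ξ|²)`, so `|σ| ≤ 1`, and
then `ρ = a + bσ ≥ a - b > 0`, from which `(z/ρ)(ρ - a)/b = σ u` and `x₃/b = τ` read off `ν(ξ)`.
-/

open Complex ComplexConjugate

lemma nu_fst_eq_ofReal_mul_div_norm (ξ : ℂ) :
    (nu ξ).1 = ((2 * ‖ξ‖ / (1 + normSq ξ) : ℝ) : ℂ) * (ξ / (‖ξ‖ : ℂ)) := by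
  rcases eq_or_ne ξ 0 with rfl | hξ
  · simp [nu]
  have hs : (‖ξ‖ : ℂ) ≠ 0 := by exact_mod_cast norm_ne_zero_iff.mpr hξ
  simp only [nu]
  push_cast
  field_simp

lemma gamma_eq_add_mul_nu (ξ : ℂ) (c b : ℝ) :
    gamma ξ ((c : ℂ) / 2 * (ξ / (‖ξ‖ : ℂ)) * ((1 - normSq ξ : ℝ) : ℂ))
        (b + c * (2 * ‖ξ‖) / (1 + normSq ξ)) =
      ((c : ℂ) * (ξ / (‖ξ‖ : ℂ)) + b * (nu ξ).1, b * (nu ξ).2) := by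
  rcases eq_or_ne ξ 0 with rfl | hξ
  · simp [gamma, nu]
  have hs : (‖ξ‖ : ℂ) ≠ 0 := by exact_mod_cast norm_ne_zero_iff.mpr hξ
  have hns : normSq ξ = ‖ξ‖ ^ 2 := (Complex.sq_norm ξ).symm
  have hconj : ξ * conj ξ = ((‖ξ‖ ^ 2 : ℝ) : ℂ) := by rw [Complex.mul_conj, hns]
  have hN : (1 + ‖ξ‖ ^ 2 : ℝ) ≠ 0 := by positivity
  have hNC : (1 + (‖ξ‖ : ℂ) ^ 2) ≠ 0 := by exact_mod_cast hN
  simp only [gamma, nu, hns, map_mul, map_div₀, Complex.conj_ofReal, map_ofNat]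
  refine Prod.ext ?_ ?_
  · push_cast
    field_simp
    linear_combination (norm := (push_cast; ring)) (-(c : ℂ) * (1 - (‖ξ‖ : ℂ) ^ 2)) * hconj
  · have hre : (c : ℂ) / 2 * (ξ / ‖ξ‖) * (1 - (‖ξ‖ : ℂ) ^ 2) * conj ξ
        + c / 2 * (conj ξ / ‖ξ‖) * (1 - (‖ξ‖ : ℂ) ^ 2) * ξ
        = ((c * (1 - ‖ξ‖ ^ 2) * ‖ξ‖ : ℝ) : ℂ) := by
      field_simp
      linear_combination (norm := (push_cast; ring)) (2 * c * (1 - (‖ξ‖ : ℂ) ^ 2)) * hconj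
    push_cast
    rw [hre, Complex.ofReal_re]
    field_simp
    ring

lemma torus_horizontal_normal {a b : ℝ} (hab : b < a) (hb : 0 < b) {u : ℂ} (hu : ‖u‖ = 1)
    {σ : ℝ} (hσ : |σ| ≤ 1) :
    0 < ‖((a + b * σ : ℝ) : ℂ) * u‖ ∧
      ((a + b * σ : ℝ) : ℂ) * u / (‖((a + b * σ : ℝ) : ℂ) * u‖ : ℂ) *
          (((‖((a + b * σ : ℝ) : ℂ) * u‖ - a) / b : ℝ) : ℂ) = σ * u := by
  have hpos : 0 < a + b * σ := by
    have := (abs_le.mp hσ).1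
    nlinarith
  have hρ : ‖((a + b * σ : ℝ) : ℂ) * u‖ = a + b * σ := by
    rw [norm_mul, hu, Complex.norm_real, Real.norm_of_nonneg hpos.le, mul_one]
  rw [hρ]
  refine ⟨hpos, ?_⟩
  have : (a : ℂ) + b * σ ≠ 0 := by exact_mod_cast hpos.ne'
  have : (b : ℂ) ≠ 0 := by exact_mod_cast hb.ne'
  push_cast
  field_simp
  ring

lemma abs_two_mul_div_one_add_sq_le_one (x : ℝ) : |2 * x / (1 + x ^ 2)| ≤ 1 := by
  rw [abs_div, abs_of_pos (by positivity : (0 : ℝ) < 1 + x ^ 2), div_le_one (by positivity),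
    abs_le]
  constructor <;> nlinarith [sq_nonneg (1 - x), sq_nonneg (1 + x)]

/-- In the torus parametrization, with `(z,t) = γ_{ξ,η}(r)`, `z = x₁ + ix₂`, `t = x₃`
and `ρ = √(x₁²+x₂²)`, we have `ρ > 0` and `ν(ξ) = ((z/ρ)·(ρ − a)/b, x₃/b)`: the line
`γ_{ξ,η}` is normal to the torus `(√(x₁²+x₂²) − a)² + x₃² = b²` at that point. -/
theorem torus_normal (a b : ℝ) (hab : b < a) (hb : 0 < b)
    (ε : ℝ) (hε : ε = 1 ∨ ε = -1) (ξ : ℂ) (hξ : ξ ≠ 0) (η : ℂ) (r : ℝ)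
    (hη : η = (ε : ℂ) * ((a : ℂ) / 2) * (ξ / ((‖ξ‖ : ℝ) : ℂ)) *
        (((1 - Complex.normSq ξ : ℝ) : ℂ)))
    (hr : r = b + ε * (2 * a * ‖ξ‖) / (1 + Complex.normSq ξ)) :
    0 < Real.sqrt ((gamma ξ η r).1.re ^ 2 + (gamma ξ η r).1.im ^ 2) ∧
    nu ξ = ((gamma ξ η r).1 /
        ((Real.sqrt ((gamma ξ η r).1.re ^ 2 + (gamma ξ η r).1.im ^ 2) : ℝ) : ℂ) *
        ((((Real.sqrt ((gamma ξ η r).1.re ^ 2 + (gamma ξ η r).1.im ^ 2) - a) / b : ℝ)) : ℂ),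
      (gamma ξ η r).2 / b) := by
  have hε2 : (ε : ℂ) * ε = 1 := by rcases hε with rfl | rfl <;> norm_num
  set σ : ℝ := 2 * ‖ξ‖ / (1 + normSq ξ) with hσ
  set u : ℂ := ε * (ξ / (‖ξ‖ : ℂ)) with hu
  have hσ_le : |ε * σ| ≤ 1 := by
    have hε_abs : |ε| = 1 := by rcases hε with rfl | rfl <;> norm_num
    rw [abs_mul, hε_abs, one_mul, hσ, ← Complex.sq_norm]
    exact abs_two_mul_div_one_add_sq_le_one _
  have hu_norm : ‖u‖ = 1 := by
    rcases hε with rfl | rfl <;> simp [hu, hξ]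
  have hη' : η = ((ε * a : ℝ) : ℂ) / 2 * (ξ / (‖ξ‖ : ℂ)) * ((1 - normSq ξ : ℝ) : ℂ) := by
    rw [hη]; push_cast; ring
  have hr' : r = b + ε * a * (2 * ‖ξ‖) / (1 + normSq ξ) := by rw [hr]; ring
  have hnu : nu ξ = ((ε * σ : ℝ) * u, (nu ξ).2) := by
    refine Prod.ext ?_ rfl
    rw [nu_fst_eq_ofReal_mul_div_norm, ← hσ, hu]
    push_cast
    linear_combination -(σ : ℂ) * (ξ / (‖ξ‖ : ℂ)) * hε2
  have hpoint : gamma ξ η r = (((a + b * (ε * σ) : ℝ) : ℂ) * u, b * (nu ξ).2) := by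
    rw [hη', hr', gamma_eq_add_mul_nu, nu_fst_eq_ofReal_mul_div_norm, ← hσ, hu]
    refine Prod.ext ?_ rfl
    push_cast
    linear_combination -(b * σ : ℂ) * (ξ / (‖ξ‖ : ℂ)) * hε2
  obtain ⟨hρ_pos, hdir⟩ := torus_horizontal_normal hab hb hu_norm hσ_le
  rw [hpoint, ← Complex.norm_eq_sqrt_sq_add_sq, hdir]
  refine ⟨hρ_pos, ?_⟩
  rw [hnu]
  field_simp
end
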